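/- arXiv:1512.02340 — 4 statements merged into one kernel-verified Lean document; each statement's English description precedes it below -/
import Mathlib

section
/- Given α, β, γ ∈ [−1, 1] with γ lying between α and β (i.e., min(α,β) ≤ γ ≤ max(α,β)), there exists a joint distribution of ±1-valued random variables (A, A', A'') with E[A] = γ, E[A'] = α, E[A''] = β such that Pr[A' ≠ A''] = (1/2)|α − β| and Pr[A' ≠ A''] = Pr[A ≠ A'] + Pr[A ≠ A'']. -/
/-- The value of a ±1-valued random variable encoded by a `Bool`. -/
noncomputable def val (b : Bool) : ℝ := if b then 1 else -1

noncomputable def jd (a b c : ℝ) : Bool × Bool × Bool → ℝ := fun x =>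
  match x with
  | (true, true, true) => (1 + a) / 2
  | (false, false, false) => (1 - b) / 2
  | (true, false, true) => (c - a) / 2
  | (false, false, true) => (b - c) / 2
  | _ => 0

noncomputable def jd2 (a b c : ℝ) : Bool × Bool × Bool → ℝ := fun x =>
  match x with
  | (true, true, true) => (1 + b) / 2
  | (false, false, false) => (1 - a) / 2
  | (true, true, false) => (c - b) / 2
  | (false, true, false) => (a - c) / 2
  | _ => 0

/-- For `α, β, γ ∈ [−1,1]` with `γ` between `α` and `β`, there is a joint
distribution of ±1-valued `(A, A', A'')` (coordinates `x.1, x.2.1, x.2.2`) with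
`E[A] = γ`, `E[A'] = α`, `E[A''] = β`, `Pr[A' ≠ A''] = (1/2)|α − β|` and
`Pr[A' ≠ A''] = Pr[A ≠ A'] + Pr[A ≠ A'']`. -/
theorem stmt3 (α β γ : ℝ) (hα : α ∈ Set.Icc (-1 : ℝ) 1) (hβ : β ∈ Set.Icc (-1 : ℝ) 1)
    (hγ₁ : min α β ≤ γ) (hγ₂ : γ ≤ max α β) :
    ∃ p : Bool × Bool × Bool → ℝ, (∀ x, 0 ≤ p x) ∧ (∑ x : Bool × Bool × Bool, p x = 1) ∧
      (∑ x : Bool × Bool × Bool, p x * val x.1) = γ ∧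
      (∑ x : Bool × Bool × Bool, p x * val x.2.1) = α ∧
      (∑ x : Bool × Bool × Bool, p x * val x.2.2) = β ∧
      (∑ x : Bool × Bool × Bool, if x.2.1 ≠ x.2.2 then p x else 0) = (1/2) * |α - β| ∧
      (∑ x : Bool × Bool × Bool, if x.2.1 ≠ x.2.2 then p x else 0) =
        (∑ x : Bool × Bool × Bool, if x.1 ≠ x.2.1 then p x else 0) +
          (∑ x : Bool × Bool × Bool, if x.1 ≠ x.2.2 then p x else 0) := by
  obtain ⟨hα1, hα2⟩ := hα
  obtain ⟨hβ1, hβ2⟩ := hβ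
  rcases le_total α β with hab | hab
  · have hγa : α ≤ γ := le_trans (by simp [min_eq_left hab]) hγ₁
    have hγb : γ ≤ β := le_trans hγ₂ (by simp [max_eq_right hab])
    refine ⟨jd α β γ, ?_, ?_, ?_, ?_, ?_, ?_, ?_⟩
    · rintro ⟨a, b, c⟩
      cases a <;> cases b <;> cases c <;> simp only [jd] <;> norm_num <;> linarith
    · simp only [Fintype.sum_prod_type, Fintype.sum_bool, jd, val]
      norm_num
      try ring
    · simp only [Fintype.sum_prod_type, Fintype.sum_bool, jd, val]
      norm_num
      try ring
    · simp only [Fintype.sum_prod_type, Fintype.sum_bool, jd, val]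
      norm_num
      try ring
    · simp only [Fintype.sum_prod_type, Fintype.sum_bool, jd, val]
      norm_num
      try ring
    · rw [abs_of_nonpos (by linarith : α - β ≤ 0)]
      simp only [Fintype.sum_prod_type, Fintype.sum_bool, jd]
      norm_num
      try ring
    · simp only [Fintype.sum_prod_type, Fintype.sum_bool, jd]
      norm_num
      try ring
  · have hγa : β ≤ γ := le_trans (by simp [min_eq_right hab]) hγ₁
    have hγb : γ ≤ α := le_trans hγ₂ (by simp [max_eq_left hab])
    refine ⟨jd2 α β γ, ?_, ?_, ?_, ?_, ?_, ?_, ?_⟩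
    · rintro ⟨a, b, c⟩
      cases a <;> cases b <;> cases c <;> simp only [jd2] <;> norm_num <;> linarith
    · simp only [Fintype.sum_prod_type, Fintype.sum_bool, jd2, val]
      norm_num
      try ring
    · simp only [Fintype.sum_prod_type, Fintype.sum_bool, jd2, val]
      norm_num
      try ring
    · simp only [Fintype.sum_prod_type, Fintype.sum_bool, jd2, val]
      norm_num
      try ring
    · simp only [Fintype.sum_prod_type, Fintype.sum_bool, jd2, val]
      norm_num
      try ring
    · rw [abs_of_nonneg (by linarith : (0:ℝ) ≤ α - β)]
      simp only [Fintype.sum_prod_type, Fintype.sum_bool, jd2]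
      norm_num
      try ring
    · simp only [Fintype.sum_prod_type, Fintype.sum_bool, jd2]
      norm_num
      try ring
end

section
/- Consider ±1-valued measurements with E[A₁] = E[A₂] = E[B₁] = E[B₂] = 0, E[A₁B₁] = E[A₁B₂] = E[A₂B₁] = 1, E[A₂B₂] = −1. Then there exists a signed measure p on {−1,+1}⁴ (a real function summing to 1) whose pairwise (Aᵢ, Bⱼ)-marginals reproduce all these expectations, with total negative mass equal to 1/2, and no such signed measure has smaller total negative mass. -/
noncomputable def pwit : Bool × Bool × Bool × Bool → ℝ
  | (true, true, true, false) => 1/4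
  | (false, false, false, true) => 1/4
  | (true, false, true, true) => 1/4
  | (false, true, false, false) => 1/4
  | (true, false, false, true) => 1/4
  | (false, true, true, false) => 1/4
  | (true, true, false, false) => -1/4
  | (false, false, true, true) => -1/4
  | _ => 0

noncomputable def fch (x : Bool × Bool × Bool × Bool) : ℝ :=
  val x.1 * val x.2.2.1 + val x.1 * val x.2.2.2 +
  val x.2.1 * val x.2.2.1 - val x.2.1 * val x.2.2.2

lemma fch_abs (x : Bool × Bool × Bool × Bool) : |fch x| ≤ 2 := by
  obtain ⟨a, b, c, d⟩ := x
  rcases a <;> rcases b <;> rcases c <;> rcases d <;>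
    simp [fch, val] <;> norm_num

lemma aux_ptwise (c r : ℝ) (h : |c| ≤ 2) :
    r * c ≤ 2 * (r + 2 * max 0 (-r)) := by
  rcases le_or_gt 0 r with hr | hr
  · have : max 0 (-r) = 0 := by simp [hr, neg_nonpos.mpr hr]
    rw [this]
    have := abs_le.mp h
    nlinarith
  · have : max 0 (-r) = -r := by
      apply max_eq_right; linarith
    rw [this]
    have := abs_le.mp h
    nlinarith

/-- For the PR-box expectations `E[A₁]=E[A₂]=E[B₁]=E[B₂]=0`,
`E[A₁B₁]=E[A₁B₂]=E[A₂B₁]=1`, `E[A₂B₂]=−1`, the least possible total negative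
mass `∑ₓ max{0, −p(x)}` over all signed joints `p` on `{−1,+1}⁴` (coordinates
`x.1 = A₁`, `x.2.1 = A₂`, `x.2.2.1 = B₁`, `x.2.2.2 = B₂`) summing to 1 whose
pairwise marginals reproduce these expectations is `1/2`, and it is attained. -/
theorem stmt13 :
    IsLeast {m : ℝ | ∃ p : Bool × Bool × Bool × Bool → ℝ,
        (∑ x : Bool × Bool × Bool × Bool, p x = 1) ∧
        (∑ x : Bool × Bool × Bool × Bool, p x * val x.1) = 0 ∧
        (∑ x : Bool × Bool × Bool × Bool, p x * val x.2.1) = 0 ∧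
        (∑ x : Bool × Bool × Bool × Bool, p x * val x.2.2.1) = 0 ∧
        (∑ x : Bool × Bool × Bool × Bool, p x * val x.2.2.2) = 0 ∧
        (∑ x : Bool × Bool × Bool × Bool, p x * (val x.1 * val x.2.2.1)) = 1 ∧
        (∑ x : Bool × Bool × Bool × Bool, p x * (val x.1 * val x.2.2.2)) = 1 ∧
        (∑ x : Bool × Bool × Bool × Bool, p x * (val x.2.1 * val x.2.2.1)) = 1 ∧
        (∑ x : Bool × Bool × Bool × Bool, p x * (val x.2.1 * val x.2.2.2)) = -1 ∧
        m = ∑ x : Bool × Bool × Bool × Bool, max 0 (-p x)}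
      (1/2) := by
  constructor
  · refine ⟨pwit, ?_, ?_, ?_, ?_, ?_, ?_, ?_, ?_, ?_, ?_⟩
    · simp only [Fintype.sum_prod_type, Fintype.sum_bool, pwit, val]; norm_num
    · simp only [Fintype.sum_prod_type, Fintype.sum_bool, pwit, val]; norm_num
    · simp only [Fintype.sum_prod_type, Fintype.sum_bool, pwit, val]; norm_num
    · simp only [Fintype.sum_prod_type, Fintype.sum_bool, pwit, val]; norm_num
    · simp only [Fintype.sum_prod_type, Fintype.sum_bool, pwit, val]; norm_num
    · simp only [Fintype.sum_prod_type, Fintype.sum_bool, pwit, val]; norm_num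
    · simp only [Fintype.sum_prod_type, Fintype.sum_bool, pwit, val]; norm_num
    · simp only [Fintype.sum_prod_type, Fintype.sum_bool, pwit, val]; norm_num
    · simp only [Fintype.sum_prod_type, Fintype.sum_bool, pwit, val]; norm_num
    · simp only [Fintype.sum_prod_type, Fintype.sum_bool, pwit]; norm_num [max_def]
  · rintro m ⟨p, h1, _, _, _, _, h5, h6, h7, h8, hm⟩
    have hsum : ∑ x : Bool × Bool × Bool × Bool, p x * fch x = 4 := by
      have : ∑ x : Bool × Bool × Bool × Bool, p x * fch x =
          (∑ x : Bool × Bool × Bool × Bool, p x * (val x.1 * val x.2.2.1)) +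
          (∑ x : Bool × Bool × Bool × Bool, p x * (val x.1 * val x.2.2.2)) +
          (∑ x : Bool × Bool × Bool × Bool, p x * (val x.2.1 * val x.2.2.1)) -
          (∑ x : Bool × Bool × Bool × Bool, p x * (val x.2.1 * val x.2.2.2)) := by
        rw [← Finset.sum_add_distrib, ← Finset.sum_add_distrib, ← Finset.sum_sub_distrib]
        apply Finset.sum_congr rfl
        intro x _
        simp [fch]; ring
      rw [this, h5, h6, h7, h8]; norm_num
    have key : (4 : ℝ) ≤ 2 * (1 + 2 * ∑ x : Bool × Bool × Bool × Bool, max 0 (-p x)) := by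
      calc (4 : ℝ) = ∑ x : Bool × Bool × Bool × Bool, p x * fch x := hsum.symm
        _ ≤ ∑ x : Bool × Bool × Bool × Bool, 2 * (p x + 2 * max 0 (-p x)) := by
            apply Finset.sum_le_sum
            intro x _
            exact aux_ptwise (fch x) (p x) (fch_abs x)
        _ = 2 * (∑ x : Bool × Bool × Bool × Bool, p x) +
            4 * ∑ x : Bool × Bool × Bool × Bool, max 0 (-p x) := by
            rw [Finset.mul_sum, Finset.mul_sum, ← Finset.sum_add_distrib]
            apply Finset.sum_congr rfl
            intro x _; ring
        _ = 2 * (1 + 2 * ∑ x : Bool × Bool × Bool × Bool, max 0 (-p x)) := by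
            rw [h1]; ring
    rw [hm]
    linarith
end

section
/- Let X, Y, Z be ±1-valued random variables (possibly on different spaces). Then the minimum over all jointly distributed triples (X̂, Ŷ, Ẑ) with the given marginal distributions of Pr[X̂ ≠ Ẑ] + Pr[Ŷ ≠ Ẑ] equals (1/2)(|E[X] − E[Z]| + |E[Y] − E[Z]|). -/
set_option maxHeartbeats 2000000 in
/-- For ±1-valued `X, Y, Z` with expectations `α, β, γ`, the least value of
`Pr[X̂ ≠ Ẑ] + Pr[Ŷ ≠ Ẑ]` over joint triples `(X̂, Ŷ, Ẑ)` (coordinates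
`x.1, x.2.1, x.2.2`) with these marginals equals `(1/2)(|α − γ| + |β − γ|)`. -/
theorem stmt16 (α β γ : ℝ) (hα : α ∈ Set.Icc (-1 : ℝ) 1)
    (hβ : β ∈ Set.Icc (-1 : ℝ) 1) (hγ : γ ∈ Set.Icc (-1 : ℝ) 1) :
    IsLeast {r : ℝ | ∃ p : Bool × Bool × Bool → ℝ, (∀ x, 0 ≤ p x) ∧
        (∀ a : Bool, (∑ b : Bool, ∑ c : Bool, p (a, b, c)) = (1 + val a * α) / 2) ∧
        (∀ b : Bool, (∑ a : Bool, ∑ c : Bool, p (a, b, c)) = (1 + val b * β) / 2) ∧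
        (∀ c : Bool, (∑ a : Bool, ∑ b : Bool, p (a, b, c)) = (1 + val c * γ) / 2) ∧
        r = (∑ x : Bool × Bool × Bool, if x.1 ≠ x.2.2 then p x else 0) +
            (∑ x : Bool × Bool × Bool, if x.2.1 ≠ x.2.2 then p x else 0)}
      ((1/2) * (|α - γ| + |β - γ|)) := by
  obtain ⟨ha1, ha2⟩ := hα
  obtain ⟨hb1, hb2⟩ := hβ
  obtain ⟨hc1, hc2⟩ := hγ
  constructor
  · -- membership: explicit comonotone coupling, by cases on the ordering
    rcases le_total α β with hab | hab <;> rcases le_total β γ with hbc | hbc <;>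
      rcases le_total α γ with hac | hac
    -- α ≤ β ≤ γ
    · refine ⟨fun x => match x with
        | (true, true, true) => (1 + α)/2
        | (false, true, true) => (β - α)/2
        | (false, false, true) => (γ - β)/2
        | (false, false, false) => (1 - γ)/2
        | _ => 0, ?_, ?_, ?_, ?_, ?_⟩
      · rintro ⟨a, b, c⟩; cases a <;> cases b <;> cases c <;> simp <;> linarith
      · intro a; cases a <;> simp [Fintype.sum_bool, val] <;> linarith
      · intro b; cases b <;> simp [Fintype.sum_bool, val] <;> linarith
      · intro c; cases c <;> simp [Fintype.sum_bool, val] <;> linarith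
      · simp [Fintype.sum_prod_type, Fintype.sum_bool]
        rw [abs_of_nonpos (by linarith : α - γ ≤ 0),
            abs_of_nonpos (by linarith : β - γ ≤ 0)]
        ring
    -- α ≤ β ≤ γ ≤ α (all equal)
    · refine ⟨fun x => match x with
        | (true, true, true) => (1 + α)/2
        | (false, true, true) => (β - α)/2
        | (false, false, true) => (γ - β)/2
        | (false, false, false) => (1 - γ)/2
        | _ => 0, ?_, ?_, ?_, ?_, ?_⟩
      · rintro ⟨a, b, c⟩; cases a <;> cases b <;> cases c <;> simp <;> linarith
      · intro a; cases a <;> simp [Fintype.sum_bool, val] <;> linarith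
      · intro b; cases b <;> simp [Fintype.sum_bool, val] <;> linarith
      · intro c; cases c <;> simp [Fintype.sum_bool, val] <;> linarith
      · simp [Fintype.sum_prod_type, Fintype.sum_bool]
        rw [abs_of_nonneg (by linarith : (0:ℝ) ≤ α - γ),
            abs_of_nonpos (by linarith : β - γ ≤ 0)]
        have : α = γ := le_antisymm (by linarith) hac
        rw [this]; ring
    -- α ≤ γ ≤ β
    · refine ⟨fun x => match x with
        | (true, true, true) => (1 + α)/2
        | (false, true, true) => (γ - α)/2
        | (false, true, false) => (β - γ)/2
        | (false, false, false) => (1 - β)/2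
        | _ => 0, ?_, ?_, ?_, ?_, ?_⟩
      · rintro ⟨a, b, c⟩; cases a <;> cases b <;> cases c <;> simp <;> linarith
      · intro a; cases a <;> simp [Fintype.sum_bool, val] <;> linarith
      · intro b; cases b <;> simp [Fintype.sum_bool, val] <;> linarith
      · intro c; cases c <;> simp [Fintype.sum_bool, val] <;> linarith
      · simp [Fintype.sum_prod_type, Fintype.sum_bool]
        rw [abs_of_nonpos (by linarith : α - γ ≤ 0),
            abs_of_nonneg (by linarith : (0:ℝ) ≤ β - γ)]
        ring
    -- γ ≤ α ≤ β
    · refine ⟨fun x => match x with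
        | (true, true, true) => (1 + γ)/2
        | (true, true, false) => (α - γ)/2
        | (false, true, false) => (β - α)/2
        | (false, false, false) => (1 - β)/2
        | _ => 0, ?_, ?_, ?_, ?_, ?_⟩
      · rintro ⟨a, b, c⟩; cases a <;> cases b <;> cases c <;> simp <;> linarith
      · intro a; cases a <;> simp [Fintype.sum_bool, val] <;> linarith
      · intro b; cases b <;> simp [Fintype.sum_bool, val] <;> linarith
      · intro c; cases c <;> simp [Fintype.sum_bool, val] <;> linarith
      · simp [Fintype.sum_prod_type, Fintype.sum_bool]
        rw [abs_of_nonneg (by linarith : (0:ℝ) ≤ α - γ),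
            abs_of_nonneg (by linarith : (0:ℝ) ≤ β - γ)]
        ring
    -- β ≤ α ≤ γ
    · refine ⟨fun x => match x with
        | (true, true, true) => (1 + β)/2
        | (true, false, true) => (α - β)/2
        | (false, false, true) => (γ - α)/2
        | (false, false, false) => (1 - γ)/2
        | _ => 0, ?_, ?_, ?_, ?_, ?_⟩
      · rintro ⟨a, b, c⟩; cases a <;> cases b <;> cases c <;> simp <;> linarith
      · intro a; cases a <;> simp [Fintype.sum_bool, val] <;> linarith
      · intro b; cases b <;> simp [Fintype.sum_bool, val] <;> linarith
      · intro c; cases c <;> simp [Fintype.sum_bool, val] <;> linarith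
      · simp [Fintype.sum_prod_type, Fintype.sum_bool]
        rw [abs_of_nonpos (by linarith : α - γ ≤ 0),
            abs_of_nonpos (by linarith : β - γ ≤ 0)]
        ring
    -- β ≤ γ ≤ α
    · refine ⟨fun x => match x with
        | (true, true, true) => (1 + β)/2
        | (true, false, true) => (γ - β)/2
        | (true, false, false) => (α - γ)/2
        | (false, false, false) => (1 - α)/2
        | _ => 0, ?_, ?_, ?_, ?_, ?_⟩
      · rintro ⟨a, b, c⟩; cases a <;> cases b <;> cases c <;> simp <;> linarith
      · intro a; cases a <;> simp [Fintype.sum_bool, val] <;> linarith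
      · intro b; cases b <;> simp [Fintype.sum_bool, val] <;> linarith
      · intro c; cases c <;> simp [Fintype.sum_bool, val] <;> linarith
      · simp [Fintype.sum_prod_type, Fintype.sum_bool]
        rw [abs_of_nonneg (by linarith : (0:ℝ) ≤ α - γ),
            abs_of_nonpos (by linarith : β - γ ≤ 0)]
        ring
    -- γ ≤ β ≤ α ≤ γ (all equal)
    · refine ⟨fun x => match x with
        | (true, true, true) => (1 + γ)/2
        | (true, true, false) => (β - γ)/2
        | (true, false, false) => (α - β)/2
        | (false, false, false) => (1 - α)/2
        | _ => 0, ?_, ?_, ?_, ?_, ?_⟩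
      · rintro ⟨a, b, c⟩; cases a <;> cases b <;> cases c <;> simp <;> linarith
      · intro a; cases a <;> simp [Fintype.sum_bool, val] <;> linarith
      · intro b; cases b <;> simp [Fintype.sum_bool, val] <;> linarith
      · intro c; cases c <;> simp [Fintype.sum_bool, val] <;> linarith
      · simp [Fintype.sum_prod_type, Fintype.sum_bool]
        rw [abs_of_nonpos (by linarith : α - γ ≤ 0),
            abs_of_nonneg (by linarith : (0:ℝ) ≤ β - γ)]
        have hbg : β = γ := le_antisymm (by linarith) (by linarith)
        have hag : α = γ := le_antisymm (by linarith) (by linarith)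
        rw [hbg, hag]; ring
    -- γ ≤ β ≤ α
    · refine ⟨fun x => match x with
        | (true, true, true) => (1 + γ)/2
        | (true, true, false) => (β - γ)/2
        | (true, false, false) => (α - β)/2
        | (false, false, false) => (1 - α)/2
        | _ => 0, ?_, ?_, ?_, ?_, ?_⟩
      · rintro ⟨a, b, c⟩; cases a <;> cases b <;> cases c <;> simp <;> linarith
      · intro a; cases a <;> simp [Fintype.sum_bool, val] <;> linarith
      · intro b; cases b <;> simp [Fintype.sum_bool, val] <;> linarith
      · intro c; cases c <;> simp [Fintype.sum_bool, val] <;> linarith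
      · simp [Fintype.sum_prod_type, Fintype.sum_bool]
        rw [abs_of_nonneg (by linarith : (0:ℝ) ≤ α - γ),
            abs_of_nonneg (by linarith : (0:ℝ) ≤ β - γ)]
        ring
  · -- lower bound
    rintro r ⟨p, h0, hX, hY, hZ, rfl⟩
    have hXt := hX true; have hXf := hX false
    have hYt := hY true; have hYf := hY false
    have hZt := hZ true; have hZf := hZ false
    simp [Fintype.sum_bool, val] at hXt hXf hYt hYf hZt hZf
    have n1 := h0 (true, true, true); have n2 := h0 (true, true, false)
    have n3 := h0 (true, false, true); have n4 := h0 (true, false, false)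
    have n5 := h0 (false, true, true); have n6 := h0 (false, true, false)
    have n7 := h0 (false, false, true); have n8 := h0 (false, false, false)
    simp [Fintype.sum_prod_type, Fintype.sum_bool]
    rcases le_total α γ with h1 | h1 <;> rcases le_total β γ with h2 | h2
    · rw [abs_of_nonpos (by linarith : α - γ ≤ 0),
          abs_of_nonpos (by linarith : β - γ ≤ 0)]
      linarith
    · rw [abs_of_nonpos (by linarith : α - γ ≤ 0),
          abs_of_nonneg (by linarith : (0:ℝ) ≤ β - γ)]
      linarith
    · rw [abs_of_nonneg (by linarith : (0:ℝ) ≤ α - γ),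
          abs_of_nonpos (by linarith : β - γ ≤ 0)]
      linarith
    · rw [abs_of_nonneg (by linarith : (0:ℝ) ≤ α - γ),
          abs_of_nonneg (by linarith : (0:ℝ) ≤ β - γ)]
      linarith
end

section
/- Let r₁, …, rₙ ∈ [−1, 1]. Then min over q ∈ [−1, 1] of (1/2) Σᵢ |rᵢ − q| equals the minimum over all choices of a ±1-valued random variable Q and all couplings (Q̂, R̂ᵢ) of Q with ±1-valued Rᵢ having E[Rᵢ] = rᵢ of Σᵢ Pr[Q̂ ≠ R̂ᵢ]. -/
/-- The maximal coupling of two ±1-valued random variables with means `q` and `ri`. -/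
noncomputable def cpl (q ri : ℝ) : Bool × Bool → ℝ
  | (true, true) => min ((1+q)/2) ((1+ri)/2)
  | (true, false) => max ((1+q)/2 - (1+ri)/2) 0
  | (false, true) => max ((1+ri)/2 - (1+q)/2) 0
  | (false, false) => 1 - max ((1+q)/2) ((1+ri)/2)

lemma cpl_nonneg {q ri : ℝ} (hq : q ∈ Set.Icc (-1:ℝ) 1) (hri : ri ∈ Set.Icc (-1:ℝ) 1)
    (x : Bool × Bool) : 0 ≤ cpl q ri x := by
  obtain ⟨hq1, hq2⟩ := hq
  obtain ⟨hr1, hr2⟩ := hri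
  rcases x with ⟨a | a, b | b⟩ <;> simp [cpl] <;> constructor <;> linarith [le_max_left ((1+q)/2) ((1+ri)/2)]

lemma cpl_row (q ri : ℝ) (a : Bool) :
    (∑ b : Bool, cpl q ri (a, b)) = (1 + val a * q) / 2 := by
  rcases le_total ((1+q)/2) ((1+ri)/2) with h | h <;>
    cases a <;>
    simp [cpl, val, Fintype.sum_bool, min_eq_left, min_eq_right, max_eq_left, max_eq_right, h,
      sub_nonneg.mpr h, sub_nonpos.mpr h] <;> linarith

lemma cpl_col (q ri : ℝ) (b : Bool) :
    (∑ a : Bool, cpl q ri (a, b)) = (1 + val b * ri) / 2 := by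
  rcases le_total ((1+q)/2) ((1+ri)/2) with h | h <;>
    cases b <;>
    simp [cpl, val, Fintype.sum_bool, min_eq_left, min_eq_right, max_eq_left, max_eq_right, h,
      sub_nonneg.mpr h, sub_nonpos.mpr h] <;> linarith

lemma cpl_disagree (q ri : ℝ) :
    (∑ x : Bool × Bool, if x.1 ≠ x.2 then cpl q ri x else 0) = |ri - q| / 2 := by
  have : (∑ x : Bool × Bool, if x.1 ≠ x.2 then cpl q ri x else 0)
      = cpl q ri (true, false) + cpl q ri (false, true) := by
    rw [Fintype.sum_prod_type]
    simp [Fintype.sum_bool]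
    try ring
  rw [this]
  simp only [cpl]
  rcases le_total q ri with h | h
  · rw [max_eq_right (by linarith), max_eq_left (by linarith), abs_of_nonneg (by linarith)]
    ring
  · rw [max_eq_left (by linarith), max_eq_right (by linarith), abs_of_nonpos (by linarith)]
    ring

/-- For `r₁, …, rₙ ∈ [−1,1]`, the minimum over `q ∈ [−1,1]` of
`(1/2)∑ᵢ |rᵢ − q|` equals the minimum over choices of a ±1-valued `Q` (with
`E[Q] = q`) and couplings `(Q̂, R̂ᵢ)` of `Q` with ±1-valued `Rᵢ` (with
`E[Rᵢ] = rᵢ`) of `∑ᵢ Pr[Q̂ ≠ R̂ᵢ]`. -/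
theorem stmt17 {n : ℕ} (r : Fin n → ℝ) (hr : ∀ i, r i ∈ Set.Icc (-1 : ℝ) 1) :
    sInf {v : ℝ | ∃ q ∈ Set.Icc (-1 : ℝ) 1, v = (1/2) * ∑ i, |r i - q|} =
      sInf {v : ℝ | ∃ q ∈ Set.Icc (-1 : ℝ) 1, ∃ p : Fin n → Bool × Bool → ℝ,
        (∀ i, ∀ x, 0 ≤ p i x) ∧
        (∀ i, ∀ a : Bool, (∑ b : Bool, p i (a, b)) = (1 + val a * q) / 2) ∧
        (∀ i, ∀ b : Bool, (∑ a : Bool, p i (a, b)) = (1 + val b * r i) / 2) ∧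
        v = ∑ i, ∑ x : Bool × Bool, if x.1 ≠ x.2 then p i x else 0} := by
  set A := {v : ℝ | ∃ q ∈ Set.Icc (-1 : ℝ) 1, v = (1/2) * ∑ i, |r i - q|} with hA
  set B := {v : ℝ | ∃ q ∈ Set.Icc (-1 : ℝ) 1, ∃ p : Fin n → Bool × Bool → ℝ,
        (∀ i, ∀ x, 0 ≤ p i x) ∧
        (∀ i, ∀ a : Bool, (∑ b : Bool, p i (a, b)) = (1 + val a * q) / 2) ∧
        (∀ i, ∀ b : Bool, (∑ a : Bool, p i (a, b)) = (1 + val b * r i) / 2) ∧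
        v = ∑ i, ∑ x : Bool × Bool, if x.1 ≠ x.2 then p i x else 0} with hB
  -- A ⊆ B
  have hAB : A ⊆ B := by
    rintro v ⟨q, hq, rfl⟩
    refine ⟨q, hq, fun i => cpl q (r i), fun i => cpl_nonneg hq (hr i),
      fun i => cpl_row q (r i), fun i => cpl_col q (r i), ?_⟩
    rw [Finset.mul_sum]
    exact Finset.sum_congr rfl fun i _ => by rw [cpl_disagree]; ring
  have hAne : A.Nonempty := ⟨(1/2) * ∑ i, |r i - 0|, 0, by norm_num, rfl⟩
  have hA0 : ∀ v ∈ A, (0:ℝ) ≤ v := by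
    rintro v ⟨q, hq, rfl⟩
    positivity
  have hB0 : ∀ v ∈ B, (0:ℝ) ≤ v := by
    rintro v ⟨q, hq, p, hp0, _, _, rfl⟩
    refine Finset.sum_nonneg fun i _ => Finset.sum_nonneg fun x _ => ?_
    split
    · exact hp0 i x
    · exact le_rfl
  have hBddA : BddBelow A := ⟨0, hA0⟩
  have hBddB : BddBelow B := ⟨0, hB0⟩
  refine le_antisymm ?_ (csInf_le_csInf hBddB hAne hAB)
  refine le_csInf (hAne.mono hAB) ?_
  rintro v ⟨q, hq, p, hp0, hrow, hcol, rfl⟩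
  refine le_trans (csInf_le hBddA ⟨q, hq, rfl⟩) ?_
  rw [Finset.mul_sum]
  refine Finset.sum_le_sum fun i _ => ?_
  have h1 : p i (true, true) + p i (true, false) = (1 + q) / 2 := by
    have := hrow i true; simpa [Fintype.sum_bool, val] using this
  have h2 : p i (true, true) + p i (false, true) = (1 + r i) / 2 := by
    have := hcol i true; simpa [Fintype.sum_bool, val] using this
  have hd : (∑ x : Bool × Bool, if x.1 ≠ x.2 then p i x else 0)
      = p i (true, false) + p i (false, true) := by
    rw [Fintype.sum_prod_type]
    simp [Fintype.sum_bool]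
    try ring
  rw [hd]
  have := hp0 i (true, false)
  have := hp0 i (false, true)
  rcases abs_cases (r i - q) with ⟨he, _⟩ | ⟨he, _⟩ <;> rw [he] <;> linarith
end
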